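/- Let E be a solvable non-nilpotent evolution algebra over a field of characteristic ≠ 2 with one-dimensional derived subalgebra (so E ≅ E_k(λ_1,...,λ_n)). If dim E > 2, then E has a one-dimensional subalgebra that is not a quasi-ideal; consequently the subalgebra lattice of E is not modular. If dim E = 2, then E ≅ E_2(1,-1) and its subalgebra lattice is distributive. -/

import Mathlib

/-!
Since `E² = K w` is a line, the product is `x y = B(x, y) w` for a symmetric bilinear form `B`.
Solvability forces `w² = 0`, and non-nilpotency gives some `y` with `y w ≠ 0`; normalising `y`
yields `z` with `z² = 0` and `z w = w`, so `w` and `z` span a hyperbolic plane for `B`.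

If `dim E > 2`, some `e ≠ 0` is `B`-orthogonal to that plane, and `v = w - (B(e, e) / 2) z + e`
satisfies `v² = 0` and `z v = w`. The lines `K z` and `K v` are subalgebras, but the subalgebra
they generate contains `w ∉ K z + K v`; with `W = K z + K w` this also breaks the modular law.

If `dim E = 2`, a line `K x` is a subalgebra only if `x² = 0` or `x ∈ K w`, so the subalgebras are
`0, K w, K z, E`, a Boolean lattice, and `(w + z, w - z)` is a natural basis of type `E₂(1, -1)`.
-/

open Submodule

variable {K : Type} [Field K] {E : Type} [AddCommGroup E] [Module K E]

/-- The product of two submodules under a bilinear multiplication. -/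
def mulSet (μ : E →ₗ[K] E →ₗ[K] E) (U V : Submodule K E) : Submodule K E :=
  Submodule.span K {z | ∃ u ∈ U, ∃ v ∈ V, z = μ u v}

/-- Derived series starting from a submodule: `dser μ I 0 = I`,
`dser μ I (k+1) = (dser μ I k)·(dser μ I k)`.  Thus `dser μ ⊤ (k-1) = E^(k)`. -/
def dser (μ : E →ₗ[K] E →ₗ[K] E) (I : Submodule K E) : ℕ → Submodule K E
  | 0 => I
  | k + 1 => mulSet μ (dser μ I k) (dser μ I k)

/-- Lower central-type series: `lowerPow μ k = E^(k+1)` where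
`E^1 = E` and `E^(k+1) = Σ_{i=1}^k E^i E^(k+1-i)`. -/
def lowerPow (μ : E →ₗ[K] E →ₗ[K] E) : ℕ → Submodule K E
  | 0 => ⊤
  | k + 1 => ⨆ i : Fin (k + 1), mulSet μ (lowerPow μ i.1) (lowerPow μ (k - i.1))
  decreasing_by
  · exact i.2
  · omega

/-- A submodule closed under the multiplication. -/
def IsSubalg (μ : E →ₗ[K] E →ₗ[K] E) (U : Submodule K E) : Prop :=
  ∀ x ∈ U, ∀ y ∈ U, μ x y ∈ U

/-- A (two-sided) ideal. -/
def IsIdeal (μ : E →ₗ[K] E →ₗ[K] E) (I : Submodule K E) : Prop :=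
  ∀ x ∈ I, ∀ y : E, μ x y ∈ I ∧ μ y x ∈ I

/-- Subalgebra generated by a set. -/
def gen (μ : E →ₗ[K] E →ₗ[K] E) (s : Set E) : Submodule K E :=
  sInf {W | IsSubalg μ W ∧ s ⊆ W}

/-- Quasi-ideal: the subalgebra generated together with any subalgebra is the vector-space sum. -/
def QuasiIdeal (μ : E →ₗ[K] E →ₗ[K] E) (U : Submodule K E) : Prop :=
  IsSubalg μ U ∧ ∀ V : Submodule K E, IsSubalg μ V → gen μ (↑U ∪ ↑V) = U ⊔ V

/-- The subalgebra lattice is modular. -/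
def ModularLat (μ : E →ₗ[K] E →ₗ[K] E) : Prop :=
  ∀ U V W : Submodule K E, IsSubalg μ U → IsSubalg μ V → IsSubalg μ W → U ≤ W →
    gen μ (↑U ∪ ↑(V ⊓ W)) = gen μ (↑U ∪ ↑V) ⊓ W

/-- The subalgebra lattice is distributive. -/
def DistribLat (μ : E →ₗ[K] E →ₗ[K] E) : Prop :=
  ∀ U V W : Submodule K E, IsSubalg μ U → IsSubalg μ V → IsSubalg μ W →
    gen μ (↑U ∪ ↑(V ⊓ W)) = gen μ (↑U ∪ ↑V) ⊓ gen μ (↑U ∪ ↑W)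

/-- Supersolvable: a complete flag of ideals. -/
def Supersolvable (μ : E →ₗ[K] E →ₗ[K] E) : Prop :=
  ∃ I : ℕ → Submodule K E, (∀ i, IsIdeal μ (I i)) ∧ (∀ i, I i ≤ I (i + 1)) ∧
    (∀ i ≤ Module.finrank K E, Module.finrank K (I i) = i) ∧ I (Module.finrank K E) = ⊤

/-- Maximal subalgebra `A` of the subalgebra `B`. -/
def MaxIn (μ : E →ₗ[K] E →ₗ[K] E) (A B : Submodule K E) : Prop :=
  A ≤ B ∧ A ≠ B ∧ ∀ W : Submodule K E, IsSubalg μ W → A ≤ W → W ≤ B → W = A ∨ W = B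

lemma eq_span_singleton_of_finrank_eq_one {U : Submodule K E} (hU : Module.finrank K U = 1)
    {v : E} (hv : v ∈ U) (hv0 : v ≠ 0) : U = span K {v} := by
  have : FiniteDimensional K U := Module.finite_of_finrank_eq_succ hU
  refine (eq_of_le_of_finrank_eq ((span_singleton_le_iff_mem v U).mpr hv) ?_).symm
  rw [hU, finrank_span_singleton hv0]

lemma exists_eq_span_singleton_of_finrank_eq_one {U : Submodule K E}
    (hU : Module.finrank K U = 1) : ∃ w ≠ (0 : E), U = span K {w} := by
  obtain ⟨w, hwU, hw0⟩ := exists_mem_ne_zero_of_ne_bot fun h : U = ⊥ => by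
    rw [h, finrank_bot] at hU; exact zero_ne_one hU
  exact ⟨w, hw0, eq_span_singleton_of_finrank_eq_one hU hwU hw0⟩

lemma mem_span_singleton_of_smul_eq {c : K} {v w : E} (h : c • v = w) (hw : w ≠ 0) :
    v ∈ span K {w} := by
  have hc : c ≠ 0 := by rintro rfl; exact hw (by rw [← h, zero_smul])
  rw [← h, span_singleton_smul_eq hc.isUnit]
  exact mem_span_singleton_self v

lemma span_pair_ne_top_of_two_lt_finrank (h : 2 < Module.finrank K E) (x y : E) :
    span K {x, y} ≠ ⊤ := by
  classical
  intro htop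
  have := finrank_span_finset_le_card (R := K) ({x, y} : Finset E)
  rw [Finset.coe_pair, Set.finrank, htop, finrank_top] at this
  exact absurd (this.trans Finset.card_le_two) (by omega)

section Subalgebras

variable {μ : E →ₗ[K] E →ₗ[K] E}

lemma mem_mulSet {U V : Submodule K E} {u v : E} (hu : u ∈ U) (hv : v ∈ V) :
    μ u v ∈ mulSet μ U V :=
  subset_span ⟨u, hu, v, hv, rfl⟩

lemma mulSet_le_iff {U V W : Submodule K E} :
    mulSet μ U V ≤ W ↔ ∀ u ∈ U, ∀ v ∈ V, μ u v ∈ W := by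
  refine ⟨fun h u hu v hv => h (mem_mulSet hu hv), fun h => span_le.mpr ?_⟩
  rintro _ ⟨u, hu, v, hv, rfl⟩
  exact h u hu v hv

lemma mul_self_smul_add (hcomm : ∀ x y : E, μ x y = μ y x) (p q : K) (u v : E) :
    μ (p • u + q • v) (p • u + q • v) =
      (p * p) • μ u u + (2 * p * q) • μ u v + (q * q) • μ v v := by
  simp only [map_add, map_smul, LinearMap.add_apply, LinearMap.smul_apply, hcomm v u]
  module

lemma isSubalg_bot : IsSubalg μ ⊥ := by
  intro x hx y _
  simp [(mem_bot K).mp hx]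

lemma isSubalg_of_mul_mem {U : Submodule K E} (h : ∀ x y, μ x y ∈ U) : IsSubalg μ U :=
  fun x _ y _ => h x y

lemma isSubalg_span_singleton {x : E} (hx : μ x x = 0) : IsSubalg μ (span K {x}) := by
  intro y hy y' hy'
  obtain ⟨s, rfl⟩ := mem_span_singleton.mp hy
  obtain ⟨t, rfl⟩ := mem_span_singleton.mp hy'
  simp [hx]

lemma IsSubalg.inf {U V : Submodule K E} (hU : IsSubalg μ U) (hV : IsSubalg μ V) :
    IsSubalg μ (U ⊓ V) :=
  fun x hx y hy => ⟨hU x hx.1 y hy.1, hV x hx.2 y hy.2⟩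

lemma gen_isSubalg (s : Set E) : IsSubalg μ (gen μ s) := by
  intro x hx y hy
  rw [gen, mem_sInf] at *
  exact fun W hW => hW.1 x (hx W hW) y (hy W hW)

lemma subset_gen (s : Set E) : s ⊆ gen μ s := by
  intro x hx
  rw [gen, SetLike.mem_coe, mem_sInf]
  exact fun W hW => hW.2 hx

lemma gen_le {s : Set E} {W : Submodule K E} (hW : IsSubalg μ W) (h : s ⊆ W) :
    gen μ s ≤ W :=
  sInf_le ⟨hW, h⟩

lemma gen_union_eq_sup {U V : Submodule K E} (h : IsSubalg μ (U ⊔ V)) :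
    gen μ (↑U ∪ ↑V) = U ⊔ V := by
  refine le_antisymm (gen_le h (Set.union_subset (SetLike.coe_subset_coe.mpr le_sup_left)
    (SetLike.coe_subset_coe.mpr le_sup_right))) ?_
  calc U ⊔ V = span K (↑U ∪ ↑V) := by rw [span_union, span_eq, span_eq]
    _ ≤ gen μ (↑U ∪ ↑V) := span_le.mpr (subset_gen _)

lemma mul_mem_gen_union {U V : Submodule K E} {u v : E} (hu : u ∈ U) (hv : v ∈ V) :
    μ u v ∈ gen μ (↑U ∪ ↑V) :=
  gen_isSubalg _ u (subset_gen _ (Or.inl hu)) v (subset_gen _ (Or.inr hv))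

end Subalgebras

section Series

variable {μ : E →ₗ[K] E →ₗ[K] E}

lemma mem_dser_of_mem_span_mul_self {w : E} (hw : w ∈ span K {μ w w}) :
    ∀ m, w ∈ dser μ ⊤ m
  | 0 => trivial
  | m + 1 => by
    obtain ⟨k, hk⟩ := mem_span_singleton.mp hw
    rw [← hk]
    exact smul_mem _ k (mem_mulSet (mem_dser_of_mem_span_mul_self hw m)
      (mem_dser_of_mem_span_mul_self hw m))

lemma mul_self_eq_zero_of_solvable {w : E} (hspan : dser μ ⊤ 1 = span K {w})
    (hsolv : ∃ m, dser μ ⊤ m = ⊥) : μ w w = 0 := by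
  obtain ⟨m, hm⟩ := hsolv
  by_contra hww
  have hw : w ∈ span K {μ w w} := by
    obtain ⟨k, hk⟩ := mem_span_singleton.mp (hspan ▸ mem_mulSet trivial trivial : μ w w ∈ span K {w})
    exact mem_span_singleton_of_smul_eq hk hww
  have := mem_dser_of_mem_span_mul_self hw m
  rw [hm, mem_bot] at this
  exact hww (by simp [this])

lemma lowerPow_one : lowerPow μ 1 = mulSet μ ⊤ ⊤ := by
  rw [lowerPow]
  simp [lowerPow]

lemma lowerPow_two :
    lowerPow μ 2 = mulSet μ ⊤ (lowerPow μ 1) ⊔ mulSet μ (lowerPow μ 1) ⊤ := by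
  have h0 : lowerPow μ 0 = ⊤ := by rw [lowerPow]
  rw [lowerPow]
  refine le_antisymm (iSup_le fun i => ?_) (sup_le (le_iSup_of_le 0 ?_) (le_iSup_of_le 1 ?_))
  · fin_cases i <;> simp [h0]
  all_goals simp [h0]

end Series

section OneDimensionalSquare

variable {μ : E →ₗ[K] E →ₗ[K] E} {w : E}

lemma notMem_span_singleton_of_mul_eq (hw0 : w ≠ 0) (hww : μ w w = 0) {z : E}
    (hzw : μ z w = w) : z ∉ span K {w} := by
  intro hz
  obtain ⟨c, rfl⟩ := mem_span_singleton.mp hz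
  rw [map_smul, LinearMap.smul_apply, hww, smul_zero] at hzw
  exact hw0 hzw.symm

lemma exists_mul_ne_zero_of_not_nilpotent (hcomm : ∀ x y : E, μ x y = μ y x)
    (hspan : dser μ ⊤ 1 = span K {w}) (hnil : ¬ ∃ m, lowerPow μ m = ⊥) :
    ∃ y, μ y w ≠ 0 := by
  by_contra! h
  refine hnil ⟨2, ?_⟩
  have h1 : lowerPow μ 1 = span K {w} := lowerPow_one.trans hspan
  rw [lowerPow_two, h1, eq_bot_iff, sup_le_iff, mulSet_le_iff, mulSet_le_iff]
  constructor
  · intro x _ y hy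
    obtain ⟨t, rfl⟩ := mem_span_singleton.mp hy
    simp [h]
  · intro x hx y _
    obtain ⟨t, rfl⟩ := mem_span_singleton.mp hx
    simp [hcomm w y, h]

lemma exists_mul_self_eq_zero_mul_eq (h2 : (2 : K) ≠ 0) (hcomm : ∀ x y : E, μ x y = μ y x)
    (hE : ∀ x y, μ x y ∈ span K {w}) (hww : μ w w = 0) {y : E} (hy : μ y w ≠ 0) :
    ∃ z, μ z z = 0 ∧ μ z w = w := by
  obtain ⟨k, hk⟩ := mem_span_singleton.mp (hE y w)
  obtain ⟨t, ht⟩ := mem_span_singleton.mp (hE y y)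
  have hk0 : k ≠ 0 := by rintro rfl; exact hy (by rw [← hk, zero_smul])
  refine ⟨k⁻¹ • y - (k⁻¹ * k⁻¹ * t / 2) • w, ?_, ?_⟩
  · simp only [map_sub, map_smul, LinearMap.sub_apply, LinearMap.smul_apply, hww, hcomm w y,
      ← hk, ← ht, smul_zero, sub_zero, smul_smul]
    match_scalars
    field_simp
    ring
  · simp only [map_sub, map_smul, LinearMap.sub_apply, LinearMap.smul_apply, hww, ← hk,
      smul_zero, sub_zero, smul_smul, inv_mul_cancel₀ hk0, one_smul]

lemma exists_mul_eq_zero_notMem_span_pair (hcomm : ∀ x y : E, μ x y = μ y x)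
    (hE : ∀ x y, μ x y ∈ span K {w}) (hww : μ w w = 0) {z : E} (hzz : μ z z = 0)
    (hzw : μ z w = w) (htop : span K {w, z} ≠ ⊤) :
    ∃ e, μ e w = 0 ∧ μ e z = 0 ∧ e ∉ span K {w, z} := by
  obtain ⟨x, -, hx⟩ := SetLike.exists_of_lt htop.lt_top
  obtain ⟨p, hp⟩ := mem_span_singleton.mp (hE x w)
  obtain ⟨r, hr⟩ := mem_span_singleton.mp (hE x z)
  refine ⟨x - p • z - r • w, ?_, ?_, fun he => hx ?_⟩
  · simp [← hp, hzw, hww]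
  · simp [← hr, hzz, hcomm w z, hzw]
  · have hw : w ∈ span K {w, z} := subset_span (by simp)
    have hz : z ∈ span K {w, z} := subset_span (by simp)
    simpa only [sub_add_cancel] using add_mem (add_mem he (smul_mem _ r hw)) (smul_mem _ p hz)

lemma exists_mul_self_eq_zero_of_two_lt_finrank (h2 : (2 : K) ≠ 0)
    (hrank : 2 < Module.finrank K E) (hcomm : ∀ x y : E, μ x y = μ y x)
    (hE : ∀ x y, μ x y ∈ span K {w}) (hww : μ w w = 0) {z : E} (hzz : μ z z = 0)
    (hzw : μ z w = w) : ∃ v, μ v v = 0 ∧ μ z v = w ∧ v ∉ span K {w} := by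
  obtain ⟨e, hew, hez, he⟩ := exists_mul_eq_zero_notMem_span_pair hcomm hE hww hzz hzw
    (span_pair_ne_top_of_two_lt_finrank hrank w z)
  obtain ⟨q, hq⟩ := mem_span_singleton.mp (hE e e)
  refine ⟨w - (q / 2) • z + e, ?_, ?_, fun hv => he ?_⟩
  · simp only [map_add, map_sub, map_smul, LinearMap.add_apply, LinearMap.sub_apply,
      LinearMap.smul_apply, hww, hzz, hzw, hcomm w z, hcomm w e, hcomm z e, hew, hez, ← hq]
    match_scalars
    field_simp
    ring
  · simp [hzz, hzw, hcomm z e, hez]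
  · obtain ⟨c, hc⟩ := mem_span_singleton.mp hv
    rw [show e = (c - 1) • w + (q / 2) • z by rw [sub_smul, one_smul, hc]; abel]
    exact add_mem (smul_mem _ _ (subset_span (by simp))) (smul_mem _ _ (subset_span (by simp)))

end OneDimensionalSquare

section NonModular

variable {μ : E →ₗ[K] E →ₗ[K] E} {u v w : E}

lemma notMem_span_pair_of_mul_eq (h2 : (2 : K) ≠ 0) (hcomm : ∀ x y : E, μ x y = μ y x)
    (huu : μ u u = 0) (hvv : μ v v = 0) (hww : μ w w = 0) (huv : μ u v = w) (hw0 : w ≠ 0)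
    (hu : u ∉ span K {w}) (hv : v ∉ span K {w}) : w ∉ span K {u, v} := by
  intro hmem
  obtain ⟨p, q, hpq⟩ := mem_span_pair.mp hmem
  have hsq := mul_self_smul_add hcomm p q u v
  rw [hpq, hww, huu, hvv, huv, smul_zero, smul_zero, zero_add, add_zero, eq_comm,
    smul_eq_zero] at hsq
  have hpq0 := hsq.resolve_right hw0
  rcases mul_eq_zero.mp hpq0 with hp | rfl
  · rw [(mul_eq_zero.mp hp).resolve_left h2, zero_smul, zero_add] at hpq
    exact hv (mem_span_singleton_of_smul_eq hpq hw0)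
  · rw [zero_smul, add_zero] at hpq
    exact hu (mem_span_singleton_of_smul_eq hpq hw0)

lemma right_notMem_span_pair_of_mul_eq (h2 : (2 : K) ≠ 0) (hcomm : ∀ x y : E, μ x y = μ y x)
    (huu : μ u u = 0) (hvv : μ v v = 0) (hww : μ w w = 0) (huv : μ u v = w) (hw0 : w ≠ 0)
    (hv : v ∉ span K {w}) : v ∉ span K {u, w} := by
  intro hmem
  obtain ⟨p, q, hpq⟩ := mem_span_pair.mp hmem
  have huw : q • μ u w = w := by simpa [huu, huv] using congrArg (μ u) hpq
  have huw0 : μ u w ≠ 0 := fun h => hw0 (by rw [← huw, h, smul_zero])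
  have hq0 : q ≠ 0 := fun h => hw0 (by rw [← huw, h, zero_smul])
  have hsq := mul_self_smul_add hcomm p q u w
  rw [hpq, hvv, huu, hww, smul_zero, smul_zero, zero_add, add_zero, eq_comm,
    smul_eq_zero] at hsq
  have hp : p = 0 := by
    simpa [h2, hq0] using hsq.resolve_right huw0
  rw [hp, zero_smul, zero_add] at hpq
  exact hv (mem_span_singleton.mpr ⟨q, hpq⟩)

lemma not_quasiIdeal_span_singleton (h2 : (2 : K) ≠ 0) (hcomm : ∀ x y : E, μ x y = μ y x)
    (huu : μ u u = 0) (hvv : μ v v = 0) (hww : μ w w = 0) (huv : μ u v = w) (hw0 : w ≠ 0)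
    (hu : u ∉ span K {w}) (hv : v ∉ span K {w}) : ¬ QuasiIdeal μ (span K {u}) := by
  rintro ⟨-, hquasi⟩
  have hw := mul_mem_gen_union (μ := μ) (mem_span_singleton_self u) (mem_span_singleton_self v)
  rw [hquasi _ (isSubalg_span_singleton hvv), huv, ← span_insert] at hw
  exact notMem_span_pair_of_mul_eq h2 hcomm huu hvv hww huv hw0 hu hv hw

lemma not_modularLat_of_mul_eq (h2 : (2 : K) ≠ 0) (hcomm : ∀ x y : E, μ x y = μ y x)
    (hE : ∀ x y, μ x y ∈ span K {w}) (huu : μ u u = 0) (hvv : μ v v = 0) (hww : μ w w = 0)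
    (huv : μ u v = w) (hw0 : w ≠ 0) (hu : u ∉ span K {w}) (hv : v ∉ span K {w}) :
    ¬ ModularLat μ := by
  intro hmod
  have hU := isSubalg_span_singleton (K := K) huu
  have hW : IsSubalg μ (span K {u, w}) :=
    isSubalg_of_mul_mem fun x y => span_mono (by simp) (hE x y)
  have hVW : span K {v} ⊓ span K {u, w} = ⊥ := by
    rw [inf_comm, ← disjoint_iff, disjoint_span_singleton]
    intro h
    exact absurd h (right_notMem_span_pair_of_mul_eq h2 hcomm huu hvv hww huv hw0 hv)
  have hmod' := hmod _ _ _ hU (isSubalg_span_singleton hvv) hW (span_mono (by simp))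
  rw [hVW, gen_union_eq_sup (by rwa [sup_bot_eq]), sup_bot_eq] at hmod'
  have hwu : w ∈ span K {u} :=
    hmod' ▸ ⟨huv ▸ mul_mem_gen_union (mem_span_singleton_self u) (mem_span_singleton_self v),
      subset_span (by simp)⟩
  obtain ⟨c, hc⟩ := mem_span_singleton.mp hwu
  exact hu (mem_span_singleton_of_smul_eq hc hw0)

end NonModular

section DimensionTwo

variable {μ : E →ₗ[K] E →ₗ[K] E} {w z : E}

lemma span_singleton_inf_eq_bot (hcomm : ∀ x y : E, μ x y = μ y x) (hw0 : w ≠ 0)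
    (hww : μ w w = 0) (hzw : μ z w = w) : span K {w} ⊓ span K {z} = ⊥ := by
  rw [eq_bot_iff]
  rintro x ⟨hxw, hxz⟩
  obtain ⟨a, rfl⟩ := mem_span_singleton.mp hxw
  obtain ⟨b, hb⟩ := mem_span_singleton.mp hxz
  have hbw : b • w = 0 := by simpa [hww, hcomm w z, hzw] using congrArg (μ w) hb
  rw [← hb, (smul_eq_zero.mp hbw).resolve_right hw0, zero_smul]
  exact zero_mem _

lemma span_singleton_sup_eq_top (hrank : Module.finrank K E = 2)
    (hcomm : ∀ x y : E, μ x y = μ y x) (hw0 : w ≠ 0) (hww : μ w w = 0) (hzw : μ z w = w) :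
    span K {w} ⊔ span K {z} = ⊤ := by
  have : FiniteDimensional K E := Module.finite_of_finrank_eq_succ hrank
  have hz0 : z ≠ 0 := fun h => notMem_span_singleton_of_mul_eq hw0 hww hzw (h ▸ zero_mem _)
  refine eq_top_of_finrank_eq (le_antisymm (finrank_le _) ?_)
  have := finrank_sup_add_finrank_inf_eq (span K {w}) (span K {z})
  rw [span_singleton_inf_eq_bot hcomm hw0 hww hzw, finrank_bot, finrank_span_singleton hw0,
    finrank_span_singleton hz0] at this
  omega

lemma isSubalg_eq_of_finrank_eq_two (h2 : (2 : K) ≠ 0) (hrank : Module.finrank K E = 2)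
    (hcomm : ∀ x y : E, μ x y = μ y x) (hw0 : w ≠ 0) (hww : μ w w = 0) (hzz : μ z z = 0)
    (hzw : μ z w = w) {U : Submodule K E} (hU : IsSubalg μ U) :
    U = ⊥ ∨ U = span K {w} ∨ U = span K {z} ∨ U = ⊤ := by
  have : FiniteDimensional K E := Module.finite_of_finrank_eq_succ hrank
  have hz0 : z ≠ 0 := fun h => notMem_span_singleton_of_mul_eq hw0 hww hzw (h ▸ zero_mem _)
  have hle : Module.finrank K U ≤ 2 := hrank ▸ U.finrank_le
  obtain h0 | h1 | h2' : Module.finrank K U = 0 ∨ Module.finrank K U = 1 ∨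
      Module.finrank K U = 2 := by omega
  · exact Or.inl (finrank_eq_zero.mp h0)
  · by_cases hwU : w ∈ U
    · exact Or.inr (Or.inl (eq_span_singleton_of_finrank_eq_one h1 hwU hw0))
    by_cases hzU : z ∈ U
    · exact Or.inr (Or.inr (Or.inl (eq_span_singleton_of_finrank_eq_one h1 hzU hz0)))
    exfalso
    obtain ⟨x, hxU, hx0⟩ := exists_mem_ne_zero_of_ne_bot fun h : U = ⊥ => by
      rw [h, finrank_bot] at h1; exact zero_ne_one h1
    have hx : x ∈ span K {w, z} := by
      rw [span_insert, span_singleton_sup_eq_top hrank hcomm hw0 hww hzw]; trivial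
    obtain ⟨p, q, rfl⟩ := mem_span_pair.mp hx
    have hp : p ≠ 0 := by
      rintro rfl
      rw [zero_smul, zero_add] at hxU hx0
      exact hzU ((smul_mem_iff U (left_ne_zero_of_smul hx0)).mp hxU)
    have hq : q ≠ 0 := by
      rintro rfl
      rw [zero_smul, add_zero] at hxU hx0
      exact hwU ((smul_mem_iff U (left_ne_zero_of_smul hx0)).mp hxU)
    have hxx := hU _ hxU _ hxU
    rw [mul_self_smul_add hcomm, hww, hzz, hcomm w z, hzw] at hxx
    simp only [smul_zero, zero_add, add_zero] at hxx
    exact hwU ((smul_mem_iff U (mul_ne_zero (mul_ne_zero h2 hp) hq)).mp hxx)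
  · exact Or.inr (Or.inr (Or.inr (eq_top_of_finrank_eq (h2'.trans hrank.symm))))

lemma isSubalg_sup_of_finrank_eq_two (h2 : (2 : K) ≠ 0) (hrank : Module.finrank K E = 2)
    (hcomm : ∀ x y : E, μ x y = μ y x) (hE : ∀ x y, μ x y ∈ span K {w}) (hw0 : w ≠ 0)
    (hww : μ w w = 0) (hzz : μ z z = 0) (hzw : μ z w = w) {U V : Submodule K E}
    (hU : IsSubalg μ U) (hV : IsSubalg μ V) : IsSubalg μ (U ⊔ V) := by
  have hsup := span_singleton_sup_eq_top hrank hcomm hw0 hww hzw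
  rcases isSubalg_eq_of_finrank_eq_two h2 hrank hcomm hw0 hww hzz hzw hU with
    rfl | rfl | rfl | rfl <;>
  rcases isSubalg_eq_of_finrank_eq_two h2 hrank hcomm hw0 hww hzz hzw hV with
    rfl | rfl | rfl | rfl <;>
  simp only [bot_sup_eq, sup_bot_eq, top_sup_eq, sup_top_eq, sup_idem, hsup,
    sup_comm (span K {z})] <;>
  first
    | exact isSubalg_bot
    | exact isSubalg_span_singleton hzz
    | exact isSubalg_of_mul_mem hE
    | exact isSubalg_of_mul_mem fun _ _ => mem_top

lemma distribLat_of_finrank_eq_two (h2 : (2 : K) ≠ 0) (hrank : Module.finrank K E = 2)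
    (hcomm : ∀ x y : E, μ x y = μ y x) (hE : ∀ x y, μ x y ∈ span K {w}) (hw0 : w ≠ 0)
    (hww : μ w w = 0) (hzz : μ z z = 0) (hzw : μ z w = w) : DistribLat μ := by
  intro U V W hU hV hW
  have hgen : ∀ {X : Submodule K E}, IsSubalg μ X → gen μ (↑U ∪ ↑X) = U ⊔ X := fun hX =>
    gen_union_eq_sup (isSubalg_sup_of_finrank_eq_two h2 hrank hcomm hE hw0 hww hzz hzw hU hX)
  rw [hgen (hV.inf hW), hgen hV, hgen hW]
  have hinf := span_singleton_inf_eq_bot hcomm hw0 hww hzw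
  have hsup' := span_singleton_sup_eq_top hrank hcomm hw0 hww hzw
  have hclass := fun {X : Submodule K E} (hX : IsSubalg μ X) =>
    isSubalg_eq_of_finrank_eq_two h2 hrank hcomm hw0 hww hzz hzw hX
  rcases hclass hU with rfl | rfl | rfl | rfl <;> rcases hclass hV with rfl | rfl | rfl | rfl <;>
    rcases hclass hW with rfl | rfl | rfl | rfl <;>
    simp [hinf, hsup', inf_comm (span K {z}), sup_comm (span K {z})]

lemma exists_basis_of_finrank_eq_two (h2 : (2 : K) ≠ 0) (hrank : Module.finrank K E = 2)
    (hcomm : ∀ x y : E, μ x y = μ y x) (hw0 : w ≠ 0) (hww : μ w w = 0) (hzz : μ z z = 0)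
    (hzw : μ z w = w) :
    ∃ f : Module.Basis (Fin 2) K E, (∀ i j : Fin 2, i ≠ j → μ (f i) (f j) = 0) ∧
      μ (f 0) (f 0) = f 0 + f 1 ∧ μ (f 1) (f 1) = -(f 0 + f 1) := by
  have hwz : μ w z = w := (hcomm w z).trans hzw
  have hli : LinearIndependent K ![w + z, w - z] := by
    refine LinearIndependent.pair_iff.mpr fun s t hst => ?_
    have hw : (s - t) • w = 0 := by
      have := congrArg (μ w) hst
      simp only [map_add, map_sub, map_smul, map_zero, hww, hwz] at this
      rw [← this]
      module
    have hz : (s + t) • w = 0 := by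
      have := congrArg (μ z) hst
      simp only [map_add, map_sub, map_smul, map_zero, hzz, hzw] at this
      rw [← this]
      module
    have hs := (smul_eq_zero.mp hw).resolve_right hw0
    have ht := (smul_eq_zero.mp hz).resolve_right hw0
    refine ⟨?_, ?_⟩
    · exact (mul_eq_zero.mp (by linear_combination hs + ht : 2 * s = 0)).resolve_left h2
    · exact (mul_eq_zero.mp (by linear_combination ht - hs : 2 * t = 0)).resolve_left h2
  refine ⟨basisOfLinearIndependentOfCardEqFinrank hli (by simp [hrank]), ?_, ?_, ?_⟩
  · intro i j hij
    fin_cases i <;> fin_cases j <;> simp_all [hcomm z w]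
  · simp [hwz, hzw, hww, hzz]
  · simp [hwz, hzw, hww, hzz]
    abel

end DimensionTwo

theorem stmt17_general {n : ℕ} (h2 : (2 : K) ≠ 0)
    (μ : E →ₗ[K] E →ₗ[K] E)
    (hcomm : ∀ x y : E, μ x y = μ y x)
    (b : Module.Basis (Fin n) K E)
    (hsolv : ∃ m : ℕ, dser μ ⊤ m = ⊥)
    (hnonnilp : ¬ ∃ m : ℕ, lowerPow μ m = ⊥)
    (hder : Module.finrank K (dser μ (⊤ : Submodule K E) 1) = 1) :
    (2 < n →
      (∃ U : Submodule K E, IsSubalg μ U ∧ Module.finrank K U = 1 ∧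
        ¬ QuasiIdeal μ U) ∧ ¬ ModularLat μ) ∧
    (n = 2 →
      (∃ f : Module.Basis (Fin 2) K E, (∀ i j : Fin 2, i ≠ j → μ (f i) (f j) = 0) ∧
        μ (f 0) (f 0) = f 0 + f 1 ∧ μ (f 1) (f 1) = -(f 0 + f 1)) ∧
      DistribLat μ) := by
  have hrank : Module.finrank K E = n := by simp [Module.finrank_eq_card_basis b]
  obtain ⟨w, hw0, hspan⟩ := exists_eq_span_singleton_of_finrank_eq_one hder
  have hE : ∀ x y, μ x y ∈ span K {w} := fun x y => hspan ▸ mem_mulSet trivial trivial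
  have hww := mul_self_eq_zero_of_solvable hspan hsolv
  obtain ⟨y, hy⟩ := exists_mul_ne_zero_of_not_nilpotent hcomm hspan hnonnilp
  obtain ⟨z, hzz, hzw⟩ := exists_mul_self_eq_zero_mul_eq h2 hcomm hE hww hy
  refine ⟨fun hn => ?_, fun hn => ?_⟩
  · obtain ⟨v, hvv, hzv, hv⟩ :=
      exists_mul_self_eq_zero_of_two_lt_finrank h2 (hrank ▸ hn) hcomm hE hww hzz hzw
    have hz := notMem_span_singleton_of_mul_eq hw0 hww hzw
    refine ⟨⟨span K {z}, isSubalg_span_singleton hzz, finrank_span_singleton ?_,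
      not_quasiIdeal_span_singleton h2 hcomm hzz hvv hww hzv hw0 hz hv⟩,
      not_modularLat_of_mul_eq h2 hcomm hE hzz hvv hww hzv hw0 hz hv⟩
    exact fun h => hz (h ▸ zero_mem _)
  · subst hn
    exact ⟨exists_basis_of_finrank_eq_two h2 hrank hcomm hw0 hww hzz hzw,
      distribLat_of_finrank_eq_two h2 hrank hcomm hE hw0 hww hzz hzw⟩

/-- let `E` be a solvable non-nilpotent evolution algebra (char ≠ 2) with
one-dimensional derived subalgebra.  If `dim E > 2`, then `E` has a one-dimensional
subalgebra which is not a quasi-ideal, so the subalgebra lattice is not modular.  If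
`dim E = 2`, then `E ≅ E₂(1,-1)` (it admits a natural basis `f` with `f₁² = f₁+f₂`,
`f₂² = -(f₁+f₂)`) and the subalgebra lattice is distributive. -/
theorem stmt17 {n : ℕ} (h2 : (2 : K) ≠ 0)
    (μ : E →ₗ[K] E →ₗ[K] E)
    (hcomm : ∀ x y : E, μ x y = μ y x)
    (b : Module.Basis (Fin n) K E)
    (hnat : ∀ i j : Fin n, i ≠ j → μ (b i) (b j) = 0)
    (hsolv : ∃ m : ℕ, dser μ ⊤ m = ⊥)
    (hnonnilp : ¬ ∃ m : ℕ, lowerPow μ m = ⊥)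
    (hder : Module.finrank K (dser μ (⊤ : Submodule K E) 1) = 1) :
    (2 < n →
      (∃ U : Submodule K E, IsSubalg μ U ∧ Module.finrank K U = 1 ∧
        ¬ QuasiIdeal μ U) ∧ ¬ ModularLat μ) ∧
    (n = 2 →
      (∃ f : Module.Basis (Fin 2) K E, (∀ i j : Fin 2, i ≠ j → μ (f i) (f j) = 0) ∧
        μ (f 0) (f 0) = f 0 + f 1 ∧ μ (f 1) (f 1) = -(f 0 + f 1)) ∧
      DistribLat μ) :=
  stmt17_general h2 μ hcomm b hsolv hnonnilp hder
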